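/- arXiv:2604.07142 — 4 statements merged into one kernel-verified Lean document; each statement's English description precedes it below -/
import Mathlib

section
/- For all integers m ≥ 2 and n ≥ 1, one has ℓ_{m,n} = n·ρ_m·(1 − τ_{m,n}). -/
open scoped BigOperators

/-- The sets `ℒ_m` of the lucky-number sieve. `luckySet 0` is a junk value. -/
noncomputable def luckySet : ℕ → Set ℕ
  | 0 => Set.univ
  | 1 => {k | 1 ≤ k}
  | 2 => {2} ∪ {k | 3 ≤ k ∧ Odd k}
  | m + 3 =>
      {x | ∃ n : ℕ, 1 ≤ n ∧ ¬ (Nat.nth (· ∈ luckySet (m + 2)) (m + 1) ∣ n) ∧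
        x = Nat.nth (· ∈ luckySet (m + 2)) (n - 1)}

/-- `ℓ_{m,n}`: the `n`-th element (1-indexed) of `ℒ_m` in increasing order. -/
noncomputable def luckyEll (m n : ℕ) : ℕ := Nat.nth (· ∈ luckySet m) (n - 1)

/-- The `n`-th lucky number: `ℓ_1 = 2` and `ℓ_n = ℓ_{n,n}` for `n ≥ 2`. -/
noncomputable def lucky : ℕ → ℕ
  | 1 => 2
  | n => luckyEll n n

/-- `L_n(x) = #(ℒ_n ∩ [1, x])`. -/
noncomputable def luckyCount (n : ℕ) (x : ℝ) : ℕ :=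
  {k : ℕ | k ∈ luckySet n ∧ 1 ≤ k ∧ (k : ℝ) ≤ x}.ncard

/-- `ρ_m = ∏_{i=1}^{m-1} (1 - 1/ℓ_i)⁻¹`. -/
noncomputable def luckyRho (m : ℕ) : ℝ :=
  ∏ i ∈ Finset.Icc 1 (m - 1), ((1 : ℝ) - 1 / (lucky i : ℝ))⁻¹

/-- `τ_{m,n} = (1/n) ∑_{i=1}^{m-1} (ρ_{i+1}/ρ_m) {L_i(ℓ_{m,n})/ℓ_i}`. -/
noncomputable def luckyTau2 (m n : ℕ) : ℝ :=
  (1 / (n : ℝ)) * ∑ i ∈ Finset.Icc 1 (m - 1),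
    (luckyRho (i + 1) / luckyRho m) *
      Int.fract ((luckyCount i (luckyEll m n : ℝ) : ℝ) / (lucky i : ℝ))

/-- `τ_m = τ_{m,m}`. -/
noncomputable def luckyTau (m : ℕ) : ℝ := luckyTau2 m m

/-- `ϱ_m = ρ_m - 1 - ∑_{k=1}^{m-1} 1/k`. -/
noncomputable def luckyVarrho (m : ℕ) : ℝ :=
  luckyRho m - 1 - ∑ k ∈ Finset.Icc 1 (m - 1), (1 : ℝ) / (k : ℝ)

/-- `ξ_{x,y} = ∑_{x < i < y} 1/ℓ_i`. -/
noncomputable def luckyXi (x y : ℝ) : ℝ :=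
  ∑ i ∈ Finset.Ioo ⌊x⌋₊ ⌈y⌉₊, 1 / (lucky i : ℝ)

section Aux

attribute [local instance] Classical.propDecidable

/-- A strictly monotone enumeration with the right range is `Nat.nth`. -/
lemma nth_eq_of_strictMono {p : ℕ → Prop} {f : ℕ → ℕ} (hf : StrictMono f)
    (hr : Set.range f = setOf p) : Nat.nth p = f := by
  have hinf : (setOf p).Infinite := by
    rw [← hr]; exact Set.infinite_range_of_injective hf.injective
  exact ((Nat.nth_strictMono hinf).range_inj hf).mp
    (by rw [Nat.range_nth_of_infinite hinf, hr]; rfl)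

lemma luckySet_aux : ∀ j : ℕ,
    (luckySet (j + 2)).Infinite ∧ ∀ x ∈ luckySet (j + 2), 2 ≤ x := by
  intro j
  induction j with
  | zero =>
    constructor
    · apply Set.infinite_of_injective_forall_mem (f := fun k : ℕ => 2 * k + 3)
      · intro a b hab
        have : 2 * a + 3 = 2 * b + 3 := hab
        omega
      · intro k
        show 2 * k + 3 ∈ ({2} ∪ {k | 3 ≤ k ∧ Odd k} : Set ℕ)
        exact Or.inr ⟨by omega, by rw [Nat.odd_iff]; omega⟩
    · rintro x (hx | hx)
      · simp only [Set.mem_singleton_iff] at hx; omega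
      · exact le_trans (by norm_num) hx.1
  | succ k ih =>
    obtain ⟨hinf, hge⟩ := ih
    have hpinf : (setOf (· ∈ luckySet (k + 2))).Infinite := hinf
    set d := Nat.nth (· ∈ luckySet (k + 2)) (k + 1) with hd_def
    have hd : 2 ≤ d := hge _ (Nat.nth_mem_of_infinite hpinf _)
    constructor
    · apply Set.infinite_of_injective_forall_mem
        (f := fun j : ℕ => Nat.nth (· ∈ luckySet (k + 2)) (d * j))
      · intro a b hab
        have := Nat.nth_injective hpinf hab
        exact Nat.eq_of_mul_eq_mul_left (by omega) this
      · intro j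
        show ∃ n : ℕ, 1 ≤ n ∧ ¬ (d ∣ n) ∧
          Nat.nth (· ∈ luckySet (k + 2)) (d * j) = Nat.nth (· ∈ luckySet (k + 2)) (n - 1)
        refine ⟨d * j + 1, by omega, ?_, by simp⟩
        intro hdvd
        have h1 : d ∣ 1 := (Nat.dvd_add_right (dvd_mul_right d j)).mp hdvd
        have := Nat.le_of_dvd one_pos h1; omega
    · rintro x ⟨n, hn1, hnd, rfl⟩
      exact hge _ (Nat.nth_mem_of_infinite hpinf _)

lemma luckySet_infinite (m : ℕ) : (luckySet m).Infinite := by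
  match m with
  | 0 => exact Set.infinite_univ
  | 1 =>
    apply Set.infinite_of_injective_forall_mem (f := fun k : ℕ => k + 1)
    · intro a b hab
      have : a + 1 = b + 1 := hab
      omega
    · intro k; show 1 ≤ k + 1; omega
  | (j + 2) => exact (luckySet_aux j).1

lemma two_le_of_mem {m x : ℕ} (hm : 2 ≤ m) (hx : x ∈ luckySet m) : 2 ≤ x := by
  obtain ⟨j, rfl⟩ : ∃ j, m = j + 2 := ⟨m - 2, by omega⟩
  exact (luckySet_aux j).2 x hx

lemma one_le_of_mem {m x : ℕ} (hm : 1 ≤ m) (hx : x ∈ luckySet m) : 1 ≤ x := by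
  match m with
  | 1 => exact hx
  | (j + 2) => exact le_trans one_le_two (two_le_of_mem (by omega) hx)

lemma notdvd_infinite {d : ℕ} (hd : 2 ≤ d) :
    (setOf fun n => 1 ≤ n ∧ ¬ d ∣ n).Infinite := by
  apply Set.infinite_of_injective_forall_mem (f := fun j : ℕ => d * j + 1)
  · intro a b hab
    have h : d * a + 1 = d * b + 1 := by simpa using hab
    have h2 : d * a = d * b := by omega
    exact Nat.eq_of_mul_eq_mul_left (by omega) h2
  · intro j
    refine ⟨by omega, ?_⟩
    intro hdvd
    have h1 : d ∣ 1 := (Nat.dvd_add_right (dvd_mul_right d j)).mp hdvd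
    have := Nat.le_of_dvd one_pos h1; omega

lemma lucky_two_add (k : ℕ) : lucky (k + 2) = luckyEll (k + 2) (k + 2) := rfl

lemma lucky_one : lucky 1 = 2 := rfl

lemma luckyEll_mem {m n : ℕ} : luckyEll m n ∈ luckySet m :=
  Nat.nth_mem_of_infinite (luckySet_infinite m) _

lemma lucky_ge_two {i : ℕ} (hi : 1 ≤ i) : 2 ≤ lucky i := by
  match i with
  | 1 => norm_num [lucky_one]
  | (k + 2) => exact two_le_of_mem (by omega) (lucky_two_add k ▸ luckyEll_mem)

/-- The key structural step: the `j`-th element of `ℒ_{k+3}` is obtained from the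
enumeration of indices not divisible by `d`. -/
lemma nth_luckySet_step (k j : ℕ) :
    Nat.nth (· ∈ luckySet (k + 3)) j =
      Nat.nth (· ∈ luckySet (k + 2))
        (Nat.nth (fun n => 1 ≤ n ∧ ¬ (lucky (k + 2)) ∣ n) j - 1) := by
  have hpinf : (setOf (· ∈ luckySet (k + 2))).Infinite := luckySet_infinite (k + 2)
  have hd_eq : lucky (k + 2) = Nat.nth (· ∈ luckySet (k + 2)) (k + 1) := rfl
  set d := Nat.nth (· ∈ luckySet (k + 2)) (k + 1) with hd_def
  have hd : 2 ≤ d := two_le_of_mem (by omega) (Nat.nth_mem_of_infinite hpinf _)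
  set S : ℕ → Prop := fun n => 1 ≤ n ∧ ¬ d ∣ n with hS_def
  have hSinf : (setOf S).Infinite := notdvd_infinite hd
  have hmono : StrictMono (fun j => Nat.nth (· ∈ luckySet (k + 2)) (Nat.nth S j - 1)) := by
    intro a b hab
    have ha : S (Nat.nth S a) := Nat.nth_mem_of_infinite hSinf a
    have hb : S (Nat.nth S b) := Nat.nth_mem_of_infinite hSinf b
    have hlt : Nat.nth S a < Nat.nth S b := (Nat.nth_lt_nth hSinf).mpr hab
    exact (Nat.nth_lt_nth hpinf).mpr (by omega)
  have hrange : Set.range (fun j => Nat.nth (· ∈ luckySet (k + 2)) (Nat.nth S j - 1)) =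
      setOf (· ∈ luckySet (k + 3)) := by
    ext x
    constructor
    · rintro ⟨j, rfl⟩
      have hj : S (Nat.nth S j) := Nat.nth_mem_of_infinite hSinf j
      exact ⟨Nat.nth S j, hj.1, hj.2, rfl⟩
    · rintro ⟨n, hn1, hnd, rfl⟩
      have hn : S n := ⟨hn1, hnd⟩
      obtain ⟨j, -, hj⟩ := Nat.exists_lt_card_nth_eq hn
      refine ⟨j, ?_⟩
      simp only [hj]
  exact congrFun (nth_eq_of_strictMono hmono hrange) j

lemma luckyCount_natCast {m : ℕ} (N : ℕ) (hm : 1 ≤ m) :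
    luckyCount m (N : ℝ) = Nat.count (· ∈ luckySet m) (N + 1) := by
  have : {k : ℕ | k ∈ luckySet m ∧ 1 ≤ k ∧ (k : ℝ) ≤ (N : ℝ)} =
      ((Finset.range (N + 1)).filter (· ∈ luckySet m) : Finset ℕ) := by
    ext k
    simp only [Set.mem_setOf_eq, Finset.coe_filter, Finset.mem_range]
    constructor
    · rintro ⟨h1, h2, h3⟩
      exact ⟨by exact_mod_cast Nat.lt_succ_of_le (by exact_mod_cast h3), h1⟩
    · rintro ⟨h1, h2⟩
      exact ⟨h2, one_le_of_mem hm h2, by exact_mod_cast Nat.lt_succ_iff.mp h1⟩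
  rw [luckyCount, this, Set.ncard_coe_finset, Nat.count_eq_card_filter_range]

lemma luckyCount_luckyEll {m n : ℕ} (hm : 1 ≤ m) (hn : 1 ≤ n) :
    luckyCount m ((luckyEll m n : ℕ) : ℝ) = n := by
  have hpinf : (setOf (· ∈ luckySet m)).Infinite := luckySet_infinite m
  rw [luckyCount_natCast _ hm, luckyEll,
    Nat.count_succ, if_pos (Nat.nth_mem_of_infinite hpinf _),
    Nat.count_nth_of_infinite hpinf]
  omega

lemma count_notdvd {d : ℕ} (hd : 2 ≤ d) (N : ℕ) :
    Nat.count (fun n => 1 ≤ n ∧ ¬ d ∣ n) (N + 1) = N - N / d := by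
  rw [Nat.count_eq_card_filter_range]
  have h1 : (Finset.range (N + 1)).filter (fun n => 1 ≤ n ∧ ¬ d ∣ n) =
      (Finset.Ioc 0 N).filter (fun n => ¬ d ∣ n) := by
    ext k
    simp only [Finset.mem_filter, Finset.mem_range, Finset.mem_Ioc]
    constructor
    · rintro ⟨h1, h2, h3⟩; exact ⟨⟨by omega, by omega⟩, h3⟩
    · rintro ⟨⟨h1, h2⟩, h3⟩; exact ⟨by omega, by omega, h3⟩
  rw [h1]
  have h2 := Finset.card_filter_add_card_filter_not (s := Finset.Ioc 0 N)
    (p := fun n => d ∣ n)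
  have h3 : ((Finset.Ioc 0 N).filter (fun n => d ∣ n)).card = N / d :=
    Nat.Ioc_filter_dvd_card_eq_div N d
  have h4 : (Finset.Ioc 0 N).card = N := by simp
  omega

lemma luckyRho_pos (m : ℕ) : 0 < luckyRho m := by
  apply Finset.prod_pos
  intro i hi
  have hi1 : 1 ≤ i := (Finset.mem_Icc.mp hi).1
  have h2 : (2 : ℝ) ≤ (lucky i : ℝ) := by exact_mod_cast lucky_ge_two hi1
  have : 1 / (lucky i : ℝ) ≤ 1 / 2 := by
    apply one_div_le_one_div_of_le <;> linarith
  have : (0:ℝ) < 1 - 1 / (lucky i : ℝ) := by linarith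
  positivity

lemma luckyRho_succ {m : ℕ} (hm : 1 ≤ m) :
    luckyRho (m + 1) = luckyRho m * ((1 : ℝ) - 1 / (lucky m : ℝ))⁻¹ := by
  obtain ⟨j, rfl⟩ : ∃ j, m = j + 1 := ⟨m - 1, by omega⟩
  rw [luckyRho, luckyRho]
  simp only [Nat.add_sub_cancel]
  exact Finset.prod_Icc_succ_top (by omega) _

lemma nth_luckySet_two (j : ℕ) :
    Nat.nth (· ∈ luckySet 2) j = if j = 0 then 2 else 2 * j + 1 := by
  have hf : StrictMono (fun j : ℕ => if j = 0 then 2 else 2 * j + 1) := by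
    intro a b hab
    by_cases ha : a = 0 <;> by_cases hb : b = 0 <;> simp [ha, hb] <;> omega
  have hr : Set.range (fun j : ℕ => if j = 0 then 2 else 2 * j + 1) =
      setOf (· ∈ luckySet 2) := by
    ext x
    constructor
    · rintro ⟨j, rfl⟩
      show (if j = 0 then 2 else 2 * j + 1) ∈ ({2} ∪ {k | 3 ≤ k ∧ Odd k} : Set ℕ)
      by_cases hj : j = 0
      · rw [if_pos hj]; exact Or.inl rfl
      · rw [if_neg hj]
        exact Or.inr ⟨by omega, by rw [Nat.odd_iff]; omega⟩
    · intro hx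
      rcases hx with hx | hx
      · rw [Set.mem_singleton_iff] at hx
        exact ⟨0, by simp [hx]⟩
      · obtain ⟨h3, hodd⟩ := hx
        rw [Nat.odd_iff] at hodd
        refine ⟨(x - 1) / 2, ?_⟩
        have hne : (x - 1) / 2 ≠ 0 := by omega
        show (if (x - 1) / 2 = 0 then 2 else 2 * ((x - 1) / 2) + 1) = x
        rw [if_neg hne]
        omega
  exact congrFun (nth_eq_of_strictMono hf hr) j

lemma count_luckySet_one (N : ℕ) : Nat.count (· ∈ luckySet 1) (N + 1) = N := by
  rw [Nat.count_eq_card_filter_range]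
  have h : (Finset.range (N + 1)).filter (· ∈ luckySet 1) = Finset.Ioc 0 N := by
    ext k
    simp only [Finset.mem_filter, Finset.mem_range, Finset.mem_Ioc]
    show k < N + 1 ∧ 1 ≤ k ↔ 0 < k ∧ k ≤ N
    omega
  rw [h]
  simp

lemma lucky_main : ∀ k : ℕ, ∀ n : ℕ, 1 ≤ n →
    (luckyEll (k + 2) n : ℝ) = (n : ℝ) * luckyRho (k + 2) -
      ∑ i ∈ Finset.Icc 1 (k + 1), luckyRho (i + 1) *
        Int.fract ((luckyCount i ((luckyEll (k + 2) n : ℕ) : ℝ) : ℝ) / (lucky i : ℝ)) := by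
  intro k
  induction k with
  | zero =>
    intro n hn
    have hcount : luckyCount 1 ((luckyEll 2 n : ℕ) : ℝ) = luckyEll 2 n := by
      rw [luckyCount_natCast _ le_rfl, count_luckySet_one]
    have hEll : luckyEll 2 n = if n = 1 then 2 else 2 * n - 1 := by
      rw [luckyEll, nth_luckySet_two]
      rcases eq_or_ne n 1 with rfl | hne
      · simp
      · rw [if_neg (by omega), if_neg hne]; omega
    have hrho : luckyRho 2 = 2 := by
      rw [luckyRho]
      norm_num [lucky_one]
    rw [show (0:ℕ) + 1 + 1 = 2 from rfl] at *
    rw [show (0:ℕ) + 1 = 1 from rfl]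
    rw [Finset.Icc_self, Finset.sum_singleton, hcount, hrho, hEll, lucky_one]
    rcases eq_or_ne n 1 with rfl | hne
    · norm_num
    · rw [if_neg hne]
      have h2 : 2 ≤ n := by omega
      have hc : ((2 * n - 1 : ℕ) : ℝ) = 2 * (n : ℝ) - 1 := by
        have : (2 * n - 1 : ℕ) + 1 = 2 * n := by omega
        have := congrArg (fun t : ℕ => (t : ℝ)) this
        push_cast at this
        linarith
      rw [hc]
      have hsplit : (2 * (n : ℝ) - 1) / 2 = ((n - 1 : ℕ) : ℝ) + 1 / 2 := by
        have : ((n - 1 : ℕ) : ℝ) = (n : ℝ) - 1 := by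
          have : (n - 1 : ℕ) + 1 = n := by omega
          have := congrArg (fun t : ℕ => (t : ℝ)) this
          push_cast at this
          linarith
        rw [this]; ring
      rw [Nat.cast_ofNat, hsplit, Int.fract_natCast_add, Int.fract_eq_self.mpr ⟨by norm_num, by norm_num⟩]
      ring
  | succ k ih =>
    intro n hn
    show (luckyEll (k + 3) n : ℝ) = (n : ℝ) * luckyRho (k + 3) -
      ∑ i ∈ Finset.Icc 1 (k + 2), luckyRho (i + 1) *
        Int.fract ((luckyCount i ((luckyEll (k + 3) n : ℕ) : ℝ) : ℝ) / (lucky i : ℝ))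
    have hd : 2 ≤ lucky (k + 2) := lucky_ge_two (by omega)
    set d := lucky (k + 2) with hd_def
    set S : ℕ → Prop := fun n => 1 ≤ n ∧ ¬ d ∣ n with hS_def
    have hSinf : (setOf S).Infinite := notdvd_infinite hd
    set n' := Nat.nth S (n - 1) with hn'_def
    have hmem : S n' := Nat.nth_mem_of_infinite hSinf _
    have hE : luckyEll (k + 3) n = luckyEll (k + 2) n' := by
      rw [luckyEll, luckyEll, nth_luckySet_step]
    have hcn : Nat.count S n' = n - 1 := Nat.count_nth_of_infinite hSinf _
    have hcount : n' - n' / d = n := by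
      have h1 : Nat.count S (n' + 1) = n := by
        rw [Nat.count_succ, if_pos hmem, hcn]; omega
      have h2 : Nat.count S (n' + 1) = n' - n' / d := count_notdvd hd n'
      omega
    set q := n' / d with hq_def
    set r := n' % d with hr_def
    have hq : d * q + r = n' := Nat.div_add_mod n' d
    have hqle : q ≤ n' := Nat.div_le_self n' d
    have hrlt : r < d := Nat.mod_lt _ (by omega)
    have hr1 : 1 ≤ r := by
      rcases Nat.eq_zero_or_pos r with h0 | h0
      · exact absurd (Nat.dvd_of_mod_eq_zero h0) hmem.2
      · exact h0
    have hnq : n + q = n' := by omega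
    have key : n' * d + r = n * d + n' := by
      calc n' * d + r = (n + q) * d + r := by rw [hnq]
        _ = n * d + (d * q + r) := by ring
        _ = n * d + n' := by rw [hq]
    have keyR : (n' : ℝ) * (d : ℝ) + (r : ℝ) = (n : ℝ) * (d : ℝ) + (n' : ℝ) := by
      exact_mod_cast key
    have h2d : (2 : ℝ) ≤ (d : ℝ) := by exact_mod_cast hd
    have hd0 : (d : ℝ) ≠ 0 := by linarith
    have hd1 : (d : ℝ) - 1 ≠ 0 := by linarith
    have hfract : Int.fract ((n' : ℝ) / (d : ℝ)) = (r : ℝ) / (d : ℝ) := by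
      have hc : (n' : ℝ) = (d : ℝ) * (q : ℝ) + (r : ℝ) := by exact_mod_cast hq.symm
      rw [hc, add_div, mul_div_cancel_left₀ _ hd0, Int.fract_natCast_add]
      exact Int.fract_eq_self.mpr ⟨by positivity,
        (div_lt_one (by linarith)).mpr (by exact_mod_cast hrlt)⟩
    have hrho' : luckyRho (k + 3) = luckyRho (k + 2) * ((1 : ℝ) - 1 / (d : ℝ))⁻¹ :=
      luckyRho_succ (by omega)
    have hρ := luckyRho_pos (k + 2)
    have hkey2 : (n' : ℝ) * luckyRho (k + 2) =
        (n : ℝ) * luckyRho (k + 3) -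
          luckyRho (k + 3) * Int.fract ((n' : ℝ) / (d : ℝ)) := by
      have hinv : ((1 : ℝ) - 1 / (d : ℝ))⁻¹ = (d : ℝ) / ((d : ℝ) - 1) := by
        rw [show (1 : ℝ) - 1 / (d : ℝ) = ((d : ℝ) - 1) / (d : ℝ) by field_simp]
        rw [inv_div]
      rw [hfract, hrho', hinv]
      field_simp
      linear_combination keyR
    have hLm : luckyCount (k + 2) ((luckyEll (k + 2) n' : ℕ) : ℝ) = n' :=
      luckyCount_luckyEll (by omega) hmem.1
    have hIH := ih n' hmem.1
    rw [Finset.sum_Icc_succ_top (by omega : 1 ≤ k + 2), hE, hLm]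
    linear_combination hIH + hkey2

end Aux

theorem luckyEll_eq_rho_tau (m n : ℕ) (hm : 2 ≤ m) (hn : 1 ≤ n) :
    (luckyEll m n : ℝ) = (n : ℝ) * luckyRho m * (1 - luckyTau2 m n) := by
  obtain ⟨k, rfl⟩ : ∃ k, m = k + 2 := ⟨m - 2, by omega⟩
  have h := lucky_main k n hn
  have hρ := luckyRho_pos (k + 2)
  have hn0 : (n : ℝ) ≠ 0 := Nat.cast_ne_zero.mpr (by omega)
  have htau : (n : ℝ) * luckyRho (k + 2) * luckyTau2 (k + 2) n =
      ∑ i ∈ Finset.Icc 1 (k + 1), luckyRho (i + 1) *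
        Int.fract ((luckyCount i ((luckyEll (k + 2) n : ℕ) : ℝ) : ℝ) / (lucky i : ℝ)) := by
    rw [luckyTau2, show (k + 2 - 1 : ℕ) = k + 1 from rfl, ← mul_assoc, Finset.mul_sum]
    apply Finset.sum_congr rfl
    intro i _
    field_simp
  linear_combination h + htau
end

section
/- For every integer n ≥ 2, one has 0 ≤ log n + ϱ_n + γ + 1 − ρ_n ≤ 0.542/n, where γ is the Euler–Mascheroni constant. -/
open scoped BigOperators

section RhoAux
open Real Finset


lemma core_log_bound {u : ℝ} (h0 : 0 < u) (h1 : u ≤ 1/3) :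
    u - Real.log (1+u) ≤ 8*u^2/((4-u)*(4+3*u)) := by
  have habs : |(-u)| < 1 := by rw [abs_neg, abs_of_pos h0]; linarith
  have H := Real.abs_log_sub_add_sum_range_le habs 6
  rw [abs_neg, abs_of_pos h0] at H
  have hs : ∑ i ∈ Finset.range 6, (-u) ^ (i + 1) / ((i : ℝ) + 1)
      = -u + u^2/2 - u^3/3 + u^4/4 - u^5/5 + u^6/6 := by
    simp [Finset.sum_range_succ]
    ring
  rw [hs, show (1 : ℝ) - -u = 1 + u by ring] at H
  have h2 : (0:ℝ) < 1 - u := by linarith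
  have hlog : Real.log (1+u) ≥ u - u^2/2 + u^3/3 - u^4/4 + u^5/5 - u^6/6 - u^7/(1-u) := by
    have := (abs_le.mp H).1
    push_cast at this ⊢; linarith
  have hrem : u^7/(1-u) ≤ 3/2 * u^7 := by
    rw [div_le_iff₀ h2]
    nlinarith [pow_pos h0 7]
  have hD : (0:ℝ) < (4-u)*(4+3*u) := by nlinarith
  rw [le_div_iff₀ hD]
  nlinarith [pow_pos h0 3, pow_pos h0 4, pow_pos h0 5, pow_pos h0 6, pow_pos h0 7,
    mul_pos (mul_pos h0 h0) (sub_pos.mpr (lt_of_le_of_lt h1 (by norm_num : (1:ℝ)/3 < 1)))]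

lemma step_bound (k : ℕ) (hk : 3 ≤ k) :
    1/(k:ℝ) - (Real.log (k+1) - Real.log k) ≤ 2/(4*(k:ℝ)-1) - 2/(4*(k:ℝ)+3) := by
  have hk3 : (3:ℝ) ≤ k := by exact_mod_cast hk
  have hk0 : (0:ℝ) < k := by linarith
  have hu0 : 0 < 1/(k:ℝ) := by positivity
  have hu1 : 1/(k:ℝ) ≤ 1/3 := by
    rw [div_le_div_iff₀ hk0 (by norm_num)]; linarith
  have hlog : Real.log ((k:ℝ)+1) - Real.log k = Real.log (1 + 1/(k:ℝ)) := by
    rw [← Real.log_div (by linarith) (ne_of_gt hk0)]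
    congr 1; field_simp
  have hcore := core_log_bound hu0 hu1
  have heq : 8*(1/(k:ℝ))^2/((4-1/(k:ℝ))*(4+3*(1/(k:ℝ)))) = 2/(4*(k:ℝ)-1) - 2/(4*(k:ℝ)+3) := by
    have h1 : (4*(k:ℝ)-1) > 0 := by linarith
    have h2 : (4*(k:ℝ)+3) > 0 := by linarith
    field_simp [ne_of_gt (by linarith : (k:ℝ)*4-1 > 0)]
    ring
  rw [hlog]
  linarith [heq ▸ hcore]

lemma gamma_upper (m : ℕ) (hm : 3 ≤ m) :
    Real.eulerMascheroniConstant ≤ (harmonic (m-1) : ℝ) - Real.log m + 2/(4*(m:ℝ)-1) := by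
  set a := m - 1 with ha
  have ha2 : 2 ≤ a := by omega
  have ham : (m:ℝ) = (a:ℝ) + 1 := by
    have : m = a + 1 := by omega
    rw [this]; push_cast; ring
  have hmono : ∀ b : ℕ, a ≤ b →
      Real.eulerMascheroniSeq b + 2/(4*(b:ℝ)+3) ≤ Real.eulerMascheroniSeq a + 2/(4*(a:ℝ)+3) := by
    intro b hb
    induction b, hb using Nat.le_induction with
    | base => exact le_refl _
    | succ b hb ih =>
      refine le_trans ?_ ih
      have hb3 : 3 ≤ b + 1 := by omega
      have hstep := step_bound (b+1) hb3
      have hb0 : b ≠ 0 := by omega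
      have e1 : Real.eulerMascheroniSeq (b+1) = (harmonic (b+1) : ℝ) - Real.log ((b:ℝ)+1+1) := by
        simp [Real.eulerMascheroniSeq]
      have e2 : Real.eulerMascheroniSeq b = (harmonic b : ℝ) - Real.log ((b:ℝ)+1) := by
        simp [Real.eulerMascheroniSeq]
      have e3 : (harmonic (b+1) : ℝ) = (harmonic b : ℝ) + 1/((b:ℝ)+1) := by
        rw [harmonic_succ]; push_cast; ring
      rw [e1, e2, e3]
      push_cast at hstep ⊢
      ring_nf at hstep ⊢
      linarith
  have hlim : Real.eulerMascheroniConstant ≤ Real.eulerMascheroniSeq a + 2/(4*(a:ℝ)+3) := by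
    refine le_of_tendsto Real.tendsto_eulerMascheroniSeq ?_
    filter_upwards [Filter.eventually_ge_atTop a] with b hb
    have hpos : 0 < 2/(4*(b:ℝ)+3) := by positivity
    linarith [hmono b hb]
  have e4 : Real.eulerMascheroniSeq a = (harmonic a : ℝ) - Real.log m := by
    simp [Real.eulerMascheroniSeq, ham]
  rw [e4, ham] at hlim
  rw [ham]
  have hd : 4*((a:ℝ)+1)-1 = 4*(a:ℝ)+3 := by ring
  rw [hd]
  exact hlim

lemma harmonic_Icc (m : ℕ) : ∑ k ∈ Finset.Icc 1 m, (1:ℝ)/(k:ℝ) = (harmonic m : ℝ) := by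
  induction m with
  | zero => simp [harmonic]
  | succ m ih =>
    rw [Finset.sum_Icc_succ_top (by omega), ih, harmonic_succ]
    push_cast; ring

lemma harmonic15 : (harmonic 15 : ℝ) = 1195757/360360 := by
  have : harmonic 15 = 1195757/360360 := by
    simp [harmonic, Finset.sum_range_succ]
    norm_num
  rw [this]; norm_num

lemma harmonic23 : (harmonic 23 : ℝ) = 444316699/118982864 := by
  have : harmonic 23 = 444316699/118982864 := by
    simp [harmonic, Finset.sum_range_succ]
    norm_num
  rw [this]; norm_num

lemma rho_main_aux (n : ℕ) (hn : 2 ≤ n) :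
    0 ≤ Real.log n + Real.eulerMascheroniConstant - (harmonic (n-1) : ℝ) ∧
    Real.log n + Real.eulerMascheroniConstant - (harmonic (n-1) : ℝ) ≤ 0.542 / n := by
  have h1n : 1 ≤ n := by omega
  have hc : ((n-1 : ℕ):ℝ) + 1 = (n:ℝ) := by
    rw [Nat.cast_sub h1n]; push_cast; ring
  constructor
  · have h := Real.eulerMascheroniSeq_lt_eulerMascheroniConstant (n-1)
    have e : Real.eulerMascheroniSeq (n-1) = (harmonic (n-1) : ℝ) - Real.log n := by
      simp [Real.eulerMascheroniSeq, hc]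
    rw [e] at h
    linarith
  · rcases eq_or_lt_of_le hn with h2 | h2
    · -- n = 2
      have hn2 : n = 2 := h2.symm
      subst hn2
      have hg := gamma_upper 16 (by norm_num)
      have h16 : Real.log 16 = 4 * Real.log 2 := by
        rw [show (16:ℝ) = 2^4 by norm_num, Real.log_pow]; push_cast; ring
      norm_num [harmonic15, h16] at hg
      have hl2 := Real.log_two_gt_d9
      have hh1 : (harmonic 1 : ℝ) = 1 := by simp [harmonic]
      norm_num [hh1]
      linarith
    · rcases eq_or_lt_of_le (Nat.succ_le_of_lt h2) with h3 | h3
      · -- n = 3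
        have hn3 : n = 3 := by omega
        subst hn3
        have hg := gamma_upper 24 (by norm_num)
        have h24 : Real.log 24 = 3 * Real.log 2 + Real.log 3 := by
          rw [show (24:ℝ) = 2^3*3 by norm_num,
            Real.log_mul (by norm_num) (by norm_num), Real.log_pow]
          push_cast; ring
        norm_num [harmonic23, h24] at hg
        have hl2 := Real.log_two_gt_d9
        have hh2 : (harmonic 2 : ℝ) = 3/2 := by norm_num [harmonic, Finset.sum_range_succ]
        norm_num [hh2]
        linarith
      · -- n ≥ 4
        have h4 : (4:ℝ) ≤ n := by exact_mod_cast (by omega : 4 ≤ n)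
        have hg := gamma_upper n (by omega)
        have htail : 2/(4*(n:ℝ)-1) ≤ 0.542/(n:ℝ) := by
          rw [div_le_div_iff₀ (by linarith) (by linarith)]
          nlinarith
        linarith

end RhoAux

theorem rho_asymptotic (n : ℕ) (hn : 2 ≤ n) :
    0 ≤ Real.log n + luckyVarrho n + Real.eulerMascheroniConstant + 1 - luckyRho n ∧
    Real.log n + luckyVarrho n + Real.eulerMascheroniConstant + 1 - luckyRho n
      ≤ 0.542 / n := by
  have hE : Real.log n + luckyVarrho n + Real.eulerMascheroniConstant + 1 - luckyRho n
      = Real.log n + Real.eulerMascheroniConstant - (harmonic (n-1) : ℝ) := by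
    rw [luckyVarrho, harmonic_Icc]; ring
  rw [hE]
  exact rho_main_aux n hn
end

section
/- Let x and y be real numbers such that x ≥ 11.51 and log(0.99·(x − log x))/x ≤ y < 1. Then −log(1 − y) − y > (−log(1 − (log x)/x))/x + e^{−x}. -/
open Real intervalIntegral

lemma onesub_deriv (x : ℝ) : HasDerivAt (fun y : ℝ => 1 - y) (-1) x := by
  simpa using (hasDerivAt_id x).const_sub 1

lemma loglow (s : ℝ) (h0 : 0 ≤ s) (h1 : s < 1) :
    s + s^2/2 + s^3/3 + s^4/4 + s^5/5 ≤ -Real.log (1-s) := by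
  have ha : 0 < 1 - s := by linarith
  have hinv : ∫ x in (1-s)..1, x⁻¹ = -Real.log (1-s) := by
    rw [integral_inv (Set.notMem_uIcc_of_lt ha one_pos)]
    rw [Real.log_div one_ne_zero (ne_of_gt ha), Real.log_one, zero_sub]
  have hderiv : ∀ x ∈ Set.uIcc (1-s) 1, HasDerivAt
      (fun x : ℝ => x - (1-x)^2/2 - (1-x)^3/3 - (1-x)^4/4 - (1-x)^5/5)
      (1 + (1-x) + (1-x)^2 + (1-x)^3 + (1-x)^4) x := by
    intro x _
    have h := onesub_deriv x
    have h2 := (h.pow 2).div_const 2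
    have h3 := (h.pow 3).div_const 3
    have h4 := (h.pow 4).div_const 4
    have h5 := (h.pow 5).div_const 5
    have hid := hasDerivAt_id x
    refine ((((hid.sub h2).sub h3).sub h4).sub h5).congr_deriv ?_
    push_cast
    ring
  have hpolyint : ∫ x in (1-s)..1, (1 + (1-x) + (1-x)^2 + (1-x)^3 + (1-x)^4)
      = s + s^2/2 + s^3/3 + s^4/4 + s^5/5 := by
    rw [integral_eq_sub_of_hasDerivAt hderiv (by apply Continuous.intervalIntegrable; continuity)]
    ring
  have hmono : (∫ x in (1-s)..1, (1 + (1-x) + (1-x)^2 + (1-x)^3 + (1-x)^4))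
      ≤ ∫ x in (1-s)..1, x⁻¹ := by
    apply integral_mono_on (by linarith)
    · apply Continuous.intervalIntegrable; continuity
    · apply ContinuousOn.intervalIntegrable
      apply ContinuousOn.inv₀ continuousOn_id
      intro x hx
      rw [Set.uIcc_of_le (by linarith : 1 - s ≤ 1)] at hx
      exact ne_of_gt (lt_of_lt_of_le ha hx.1)
    · intro x hx
      have hx0 : 0 < x := lt_of_lt_of_le ha hx.1
      have hx1 : x ≤ 1 := hx.2
      rw [show (x⁻¹ : ℝ) = 1/x from (one_div x).symm, le_div_iff₀ hx0]
      nlinarith [pow_nonneg (by linarith : (0:ℝ) ≤ 1-x) 5]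
  linarith [hpolyint ▸ hinv ▸ hmono]

lemma logup (s : ℝ) (h0 : 0 ≤ s) (h1 : s < 1) :
    -Real.log (1-s) ≤ s + s^2/2 + s^3/3 + s^4/4 + s^5/(5*(1-s)) := by
  have ha : 0 < 1 - s := by linarith
  have hinv : ∫ x in (1-s)..1, x⁻¹ = -Real.log (1-s) := by
    rw [integral_inv (Set.notMem_uIcc_of_lt ha one_pos)]
    rw [Real.log_div one_ne_zero (ne_of_gt ha), Real.log_one, zero_sub]
  have hderiv : ∀ x ∈ Set.uIcc (1-s) 1, HasDerivAt
      (fun x : ℝ => x - (1-x)^2/2 - (1-x)^3/3 - (1-x)^4/4 - (1-x)^5/(5*(1-s)))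
      (1 + (1-x) + (1-x)^2 + (1-x)^3 + (1-x)^4/(1-s)) x := by
    intro x _
    have h := onesub_deriv x
    have h2 := (h.pow 2).div_const 2
    have h3 := (h.pow 3).div_const 3
    have h4 := (h.pow 4).div_const 4
    have h5 := (h.pow 5).div_const (5*(1-s))
    have hid := hasDerivAt_id x
    refine ((((hid.sub h2).sub h3).sub h4).sub h5).congr_deriv ?_
    push_cast
    field_simp
    ring
  have hpolyint : ∫ x in (1-s)..1, (1 + (1-x) + (1-x)^2 + (1-x)^3 + (1-x)^4/(1-s))
      = s + s^2/2 + s^3/3 + s^4/4 + s^5/(5*(1-s)) := by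
    rw [integral_eq_sub_of_hasDerivAt hderiv]
    · field_simp
      ring
    · apply Continuous.intervalIntegrable
      have : Continuous fun x : ℝ => (1-x)^4/(1-s) := by
        apply Continuous.div_const
        continuity
      continuity
  have hmono : (∫ x in (1-s)..1, x⁻¹)
      ≤ ∫ x in (1-s)..1, (1 + (1-x) + (1-x)^2 + (1-x)^3 + (1-x)^4/(1-s)) := by
    apply integral_mono_on (by linarith)
    · apply ContinuousOn.intervalIntegrable
      apply ContinuousOn.inv₀ continuousOn_id
      intro x hx
      rw [Set.uIcc_of_le (by linarith : 1 - s ≤ 1)] at hx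
      exact ne_of_gt (lt_of_lt_of_le ha hx.1)
    · apply Continuous.intervalIntegrable
      have : Continuous fun x : ℝ => (1-x)^4/(1-s) := by
        apply Continuous.div_const
        continuity
      continuity
    · intro x hx
      have hx0 : 0 < x := lt_of_lt_of_le ha hx.1
      have hxid : x⁻¹ = 1+(1-x)+(1-x)^2+(1-x)^3+(1-x)^4/x := by
        field_simp
        ring
      rw [hxid]
      have h4 : (0:ℝ) ≤ (1-x)^4 := pow_nonneg (by linarith [hx.2]) 4
      have : (1-x)^4/x ≤ (1-x)^4/(1-s) := by
        gcongr
        exact hx.1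
      linarith
  linarith [hpolyint ▸ hinv ▸ hmono]

lemma Glem (t A : ℝ) (ht0 : 0 < t) (ht2 : t ≤ 0.21229) (hA0 : 0 ≤ A)
    (hA : A ≤ 0.460485*t + 0.004135) :
    0.46034 < 1/2 - A + A^2/2 + (t/3)*(1-3*A+2*A^2) + (t^2/4)*(1-4*A+5*A^2)
      + (t^3/5)*(1-5*A+8*A^2) := by
  nlinarith [sq_nonneg A, sq_nonneg t, sq_nonneg (t-0.21229), mul_nonneg hA0 ht0.le,
    mul_nonneg (sub_nonneg.2 hA) ht0.le, mul_nonneg (sub_nonneg.2 hA) hA0,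
    mul_nonneg (sub_nonneg.2 ht2) hA0, mul_nonneg (sub_nonneg.2 ht2) ht0.le,
    sq_nonneg (A - 0.460485*t - 0.004135), mul_pos ht0 ht0,
    mul_nonneg (mul_nonneg (sub_nonneg.2 ht2) ht0.le) ht0.le,
    mul_nonneg (mul_nonneg (sub_nonneg.2 ht2) ht0.le) hA0]

set_option maxHeartbeats 1000000 in
lemma core (T U : ℝ) (hU : 0 < U) (hT2 : T ≤ 0.21229) (hTU : 2.4431*U ≤ T) :
    1.1241*T*U + 0.00134*U^2 <
      (T - (1.125*T+0.010102)*U)^2/2 + (T - (1.125*T+0.010102)*U)^3/3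
      + (T - (1.125*T+0.010102)*U)^4/4 + (T - (1.125*T+0.010102)*U)^5/5 := by
  have hT0 : 0 < T := lt_of_lt_of_le (by positivity) hTU
  set A := (1.125*T+0.010102)*U/T with hA
  have hA0 : 0 ≤ A := by positivity
  have hAle : A ≤ 0.460485*T + 0.004135 := by
    rw [hA, div_le_iff₀ hT0]
    nlinarith [mul_nonneg (by positivity : (0:ℝ) ≤ 1.125*T+0.010102)
        (by linarith : (0:ℝ) ≤ T - 2.4431*U), sq_nonneg T, hT0.le]
  have hA1 : A ≤ 0.102 := by linarith
  have hs : T - (1.125*T+0.010102)*U = T*(1-A) := by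
    rw [hA]
    field_simp
  have hb3 : 1-3*A+2*A^2 ≤ (1-A)^3 := by nlinarith [sq_nonneg A]
  have hb4 : 1-4*A+5*A^2 ≤ (1-A)^4 := by nlinarith [sq_nonneg A, sq_nonneg (A-0.102)]
  have hb5 : 1-5*A+8*A^2 ≤ (1-A)^5 := by nlinarith [sq_nonneg A, sq_nonneg (A-0.102)]
  have c3 : T^3*(1-3*A+2*A^2)/3 ≤ (T*(1-A))^3/3 := by
    calc T^3*(1-3*A+2*A^2)/3 = T^3/3*(1-3*A+2*A^2) := by ring
      _ ≤ T^3/3*(1-A)^3 := by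
          apply mul_le_mul_of_nonneg_left hb3 (by positivity)
      _ = (T*(1-A))^3/3 := by ring
  have c4 : T^4*(1-4*A+5*A^2)/4 ≤ (T*(1-A))^4/4 := by
    calc T^4*(1-4*A+5*A^2)/4 = T^4/4*(1-4*A+5*A^2) := by ring
      _ ≤ T^4/4*(1-A)^4 := by
          apply mul_le_mul_of_nonneg_left hb4 (by positivity)
      _ = (T*(1-A))^4/4 := by ring
  have c5 : T^5*(1-5*A+8*A^2)/5 ≤ (T*(1-A))^5/5 := by
    calc T^5*(1-5*A+8*A^2)/5 = T^5/5*(1-5*A+8*A^2) := by ring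
      _ ≤ T^5/5*(1-A)^5 := by
          apply mul_le_mul_of_nonneg_left hb5 (by positivity)
      _ = (T*(1-A))^5/5 := by ring
  have hG := Glem T A hT0 hT2 hA0 hAle
  have hTT : (0:ℝ) < T^2 := by positivity
  have hG2 := mul_lt_mul_of_pos_left hG hTT
  have e : T^2*(1/2 - A + A^2/2 + (T/3)*(1-3*A+2*A^2) + (T^2/4)*(1-4*A+5*A^2)
      + (T^3/5)*(1-5*A+8*A^2)) = (T*(1-A))^2/2 + T^3*(1-3*A+2*A^2)/3
      + T^4*(1-4*A+5*A^2)/4 + T^5*(1-5*A+8*A^2)/5 := by ring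
  rw [e] at hG2
  have hlhs : 1.1241*T*U + 0.00134*U^2 ≤ 0.46034*T^2 := by
    nlinarith [sq_nonneg (T - 2.4431*U), sq_nonneg U,
      mul_nonneg (by linarith : (0:ℝ) ≤ T - 2.4431*U) hU.le]
  rw [hs]
  calc 1.1241*T*U + 0.00134*U^2 ≤ 0.46034*T^2 := hlhs
    _ = T^2*0.46034 := by ring
    _ < (T*(1-A))^2/2 + T^3*(1-3*A+2*A^2)/3 + T^4*(1-4*A+5*A^2)/4
        + T^5*(1-5*A+8*A^2)/5 := hG2
    _ ≤ (T*(1-A))^2/2 + (T*(1-A))^3/3 + (T*(1-A))^4/4 + (T*(1-A))^5/5 := by linarith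

lemma hexp1 : Real.exp 2.4431 ≤ 11.51 := by
  have h43 : Real.exp 0.4431 ≤ 1.55754 := by
    have h := Real.exp_bound' (by norm_num : (0:ℝ) ≤ 0.4431) (by norm_num : (0.4431:ℝ) ≤ 1)
      (n := 6) (by norm_num)
    refine h.trans ?_
    norm_num [Finset.sum_range_succ, Nat.factorial]
  have hsplit : Real.exp 2.4431 = Real.exp 1 * Real.exp 1 * Real.exp 0.4431 := by
    rw [← Real.exp_add, ← Real.exp_add]; norm_num
  rw [hsplit]
  have e9 := Real.exp_one_lt_d9.le
  calc Real.exp 1 * Real.exp 1 * Real.exp 0.4431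
      ≤ 2.7182818286*2.7182818286*1.55754 := by
        have p1 := (Real.exp_pos 1).le
        have p2 := (Real.exp_pos 0.4431).le
        gcongr
    _ ≤ 11.51 := by norm_num

lemma hexp2 : (11.51:ℝ) ≤ Real.exp 2.4434 := by
  have h44 : (1.55798:ℝ) ≤ Real.exp 0.4434 := by
    have h := Real.sum_le_exp_of_nonneg (by norm_num : (0:ℝ) ≤ 0.4434) 6
    refine le_trans ?_ h
    norm_num [Finset.sum_range_succ, Nat.factorial]
  have hsplit : Real.exp 2.4434 = Real.exp 1 * Real.exp 1 * Real.exp 0.4434 := by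
    rw [← Real.exp_add, ← Real.exp_add]; norm_num
  rw [hsplit]
  have e9 := Real.exp_one_gt_d9.le
  calc (11.51:ℝ) ≤ 2.7182818283*2.7182818283*1.55798 := by norm_num
    _ ≤ Real.exp 1 * Real.exp 1 * Real.exp 0.4434 := by gcongr <;> norm_num

lemma hexp3 : (99207:ℝ) ≤ Real.exp 11.51 := by
  have h51 : (1.66526:ℝ) ≤ Real.exp 0.51 := by
    have h := Real.sum_le_exp_of_nonneg (by norm_num : (0:ℝ) ≤ 0.51) 6
    refine le_trans ?_ h
    norm_num [Finset.sum_range_succ, Nat.factorial]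
  have h11 : Real.exp (11:ℝ) = Real.exp 1^11 := by
    rw [← Real.exp_nat_mul]; norm_num
  calc (99207:ℝ) ≤ 2.7182818283^11 * 1.66526 := by norm_num
    _ ≤ Real.exp 1^11 * Real.exp 0.51 := by
        gcongr <;> exact le_trans (by norm_num) Real.exp_one_gt_d9.le
    _ = Real.exp 11 * Real.exp 0.51 := by rw [h11]
    _ = Real.exp 11.51 := by rw [← Real.exp_add]; norm_num

set_option maxHeartbeats 2000000 in
theorem tricky_inequality (x y : ℝ) (hx : 11.51 ≤ x)
    (hy₁ : Real.log (0.99 * (x - Real.log x)) / x ≤ y) (hy₂ : y < 1) :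
    (-Real.log (1 - Real.log x / x)) / x + Real.exp (-x)
      < -Real.log (1 - y) - y := by
  have hx0 : (0:ℝ) < x := by linarith [show (0:ℝ) < 11.51 by norm_num]
  set L := Real.log x with hLdef
  have hL1 : 2.4431 ≤ L := by
    rw [hLdef, Real.le_log_iff_exp_le hx0]
    linarith [hexp1]
  have hlog1151 : Real.log 11.51 ≤ 2.4434 := by
    rw [Real.log_le_iff_le_exp (by norm_num)]
    exact hexp2
  have hconc : L - Real.log 11.51 ≤ x/11.51 - 1 := by
    have h := Real.log_le_sub_one_of_pos (show (0:ℝ) < x/11.51 by positivity)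
    rwa [Real.log_div (ne_of_gt hx0) (by norm_num)] at h
  have hL2 : L ≤ 0.21229*x := by
    have h' : L ≤ 1.4434 + x*(100/1151) := by
      have h2 : x/11.51 = x*(100/1151) := by ring
      linarith [h2 ▸ hconc, hlog1151]
    linarith
  set T := L/x with hTdef
  set U := 1/x with hUdef
  have hU0 : (0:ℝ) < U := by rw [hUdef]; positivity
  have hT0 : (0:ℝ) < T := by rw [hTdef]; positivity
  have hT2 : T ≤ 0.21229 := by
    rw [hTdef, div_le_iff₀ hx0]
    linarith
  have hT1 : T < 1 := by linarith
  have hU2 : U ≤ 0.086881 := by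
    rw [hUdef, div_le_iff₀ hx0]
    linarith
  have hTUc : 2.4431*U ≤ T := by
    rw [hTdef, hUdef, mul_one_div]
    gcongr
  have hTU : T = L*U := by rw [hTdef, hUdef]; ring
  have hxL : 0 < x - L := by nlinarith
  set yo := Real.log (0.99*(x - L))/x with hyodef
  have h1T : 0 < 1 - T := by linarith
  have hyo2 : yo = (Real.log 0.99 + (L + Real.log (1-T)))*U := by
    rw [hyodef, hUdef]
    rw [Real.log_mul (by norm_num) (ne_of_gt hxL)]
    have hxT : x - L = x*(1-T) := by rw [hTdef]; field_simp
    rw [hxT, Real.log_mul (ne_of_gt hx0) (ne_of_gt h1T), ← hLdef]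
    ring
  have hc99 : (-0.010102:ℝ) ≤ Real.log 0.99 := by
    have h := Real.log_le_sub_one_of_pos (show (0:ℝ) < (0.99:ℝ)⁻¹ by norm_num)
    rw [Real.log_inv] at h
    have : ((0.99:ℝ)⁻¹ - 1) ≤ 0.010102 := by norm_num
    linarith
  have hlogupT : -Real.log (1-T) ≤ 1.1241*T := by
    have h := logup T hT0.le hT1
    have h5 : T^5/(5*(1-T)) ≤ 0.254*T^5 := by
      rw [div_le_iff₀ (by linarith : (0:ℝ) < 5*(1-T))]
      nlinarith [mul_nonneg (pow_nonneg hT0.le 5) (by linarith : (0:ℝ) ≤ 0.2126 - T)]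
    have p2 : T^2 ≤ 0.21229*T := by nlinarith
    have p3 : T^3 ≤ 0.21229*T^2 := by
      nlinarith [mul_nonneg (sq_nonneg T) (by linarith : (0:ℝ) ≤ 0.21229 - T)]
    have p4 : T^4 ≤ 0.21229*T^3 := by
      nlinarith [mul_nonneg (pow_nonneg hT0.le 3) (by linarith : (0:ℝ) ≤ 0.21229 - T)]
    have p5 : T^5 ≤ 0.21229*T^4 := by
      nlinarith [mul_nonneg (pow_nonneg hT0.le 4) (by linarith : (0:ℝ) ≤ 0.21229 - T)]
    linarith
  set E := T - (1.125*T+0.010102)*U with hEdef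
  clear_value L T U yo E
  have hEyo : E ≤ yo := by
    have h1 : (0:ℝ) ≤ Real.log 0.99 + 0.010102 := by linarith
    have h2 : (0:ℝ) ≤ Real.log (1-T) + 1.125*T := by linarith
    have hdiff : yo - E = (Real.log 0.99 + 0.010102)*U + (Real.log (1-T) + 1.125*T)*U := by
      rw [hyo2, hEdef, hTU]
      ring
    linarith [hdiff, mul_nonneg h1 hU0.le, mul_nonneg h2 hU0.le]
  have hE0 : 0 < E := by
    rw [hEdef]
    nlinarith [mul_nonneg (by linarith : (0:ℝ) ≤ T - 2.4431*U)
      (by linarith : (0:ℝ) ≤ 1 - 1.125*U), mul_pos hU0 hU0, hU0.le]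
  have hyo1 : yo < 1 := lt_of_le_of_lt hy₁ hy₂
  have hyo0 : (0:ℝ) ≤ yo := le_trans hE0.le hEyo
  -- monotone step
  have h1y : 0 < 1 - y := by linarith
  have h1yo : 0 < 1 - yo := by linarith
  have hmonof : -Real.log (1-yo) - yo ≤ -Real.log (1-y) - y := by
    have hdiv : (0:ℝ) < (1-y)/(1-yo) := by positivity
    have hlog := Real.log_le_sub_one_of_pos hdiv
    rw [Real.log_div (ne_of_gt h1y) (ne_of_gt h1yo)] at hlog
    have hq : (1-y)/(1-yo) - 1 ≤ yo - y := by
      rw [div_sub_one (ne_of_gt h1yo), div_le_iff₀ h1yo]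
      nlinarith [mul_nonneg hyo0 (by linarith [hy₁] : (0:ℝ) ≤ y - yo)]
    linarith
  have hlow := loglow yo hyo0 hyo1
  have hp2 : E^2 ≤ yo^2 := pow_le_pow_left₀ hE0.le hEyo 2
  have hp3 : E^3 ≤ yo^3 := pow_le_pow_left₀ hE0.le hEyo 3
  have hp4 : E^4 ≤ yo^4 := pow_le_pow_left₀ hE0.le hEyo 4
  have hp5 : E^5 ≤ yo^5 := pow_le_pow_left₀ hE0.le hEyo 5
  -- exp(-x) bound
  have hd : (0:ℝ) ≤ x - 11.51 := by linarith
  have ha8 : (1:ℝ) + (x-11.51)/8 ≤ Real.exp ((x-11.51)/8) := by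
    have := Real.add_one_le_exp ((x-11.51)/8)
    linarith
  have hb8 : ((1:ℝ) + (x-11.51)/8)^8 ≤ Real.exp ((x-11.51)/8)^8 :=
    pow_le_pow_left₀ (by linarith) ha8 8
  have hc8 : Real.exp ((x-11.51)/8)^8 = Real.exp (x-11.51) := by
    rw [← Real.exp_nat_mul]
    congr 1
    push_cast
    ring
  have hx8 : x^8 ≤ 11.51^8 * Real.exp (x-11.51) := by
    have h1 : x ≤ 11.51*(1+(x-11.51)/8) := by linarith
    calc x^8 ≤ (11.51*(1+(x-11.51)/8))^8 := pow_le_pow_left₀ hx0.le h1 8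
      _ = 11.51^8*((1+(x-11.51)/8))^8 := by ring
      _ ≤ 11.51^8*Real.exp (x-11.51) := by
          have h2 := hb8
          rw [hc8] at h2
          exact mul_le_mul_of_nonneg_left h2 (by norm_num)
  have hfin : x^8 * Real.exp (-x) ≤ 11.51^8 * Real.exp (-11.51) := by
    have hEE : Real.exp (x-11.51) * Real.exp (-x) = Real.exp (-11.51) := by
      rw [← Real.exp_add]
      congr 1
      ring
    calc x^8 * Real.exp (-x) ≤ (11.51^8 * Real.exp (x-11.51)) * Real.exp (-x) :=
        mul_le_mul_of_nonneg_right hx8 (Real.exp_pos _).le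
      _ = 11.51^8 * (Real.exp (x-11.51) * Real.exp (-x)) := by ring
      _ = 11.51^8 * Real.exp (-11.51) := by rw [hEE]
  have h115 : (11.51:ℝ)^8 * Real.exp (-11.51) ≤ 3105 := by
    have hinv : Real.exp (-11.51) ≤ 1/99207 := by
      rw [Real.exp_neg, inv_eq_one_div]
      exact one_div_le_one_div_of_le (by norm_num) hexp3
    calc (11.51:ℝ)^8*Real.exp (-11.51) ≤ 11.51^8*(1/99207) :=
        mul_le_mul_of_nonneg_left hinv (by norm_num)
      _ ≤ 3105 := by norm_num
  have hExpB : Real.exp (-x) ≤ 0.00134*U^2 := by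
    have hx8p : (0:ℝ) < x^8 := by positivity
    have h1 : Real.exp (-x) ≤ 3105/x^8 := by
      rw [le_div_iff₀ hx8p]
      calc Real.exp (-x)*x^8 = x^8*Real.exp (-x) := by ring
        _ ≤ 11.51^8*Real.exp (-11.51) := hfin
        _ ≤ 3105 := h115
    have h2 : 3105/x^8 ≤ 0.00134*U^2 := by
      rw [hUdef]
      have heq : (0.00134:ℝ)*(1/x)^2 = 0.00134/x^2 := by ring
      rw [heq, div_le_div_iff₀ hx8p (by positivity)]
      have h6 : (11.51:ℝ)^6 ≤ x^6 := pow_le_pow_left₀ (by norm_num) hx 6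
      have h7 : (3105:ℝ) ≤ 0.00134*x^6 := by nlinarith
      calc (3105:ℝ)*x^2 ≤ (0.00134*x^6)*x^2 := mul_le_mul_of_nonneg_right h7 (sq_nonneg x)
        _ = 0.00134*x^8 := by ring
    linarith
  -- assemble
  have hcore := core T U hU0 hT2 hTUc
  rw [← hEdef] at hcore
  have hF1 : (-Real.log (1-T))/x ≤ 1.1241*T*U := by
    have heq : (-Real.log (1-T))/x = (-Real.log (1-T))*U := by rw [hUdef]; ring
    rw [heq]
    calc (-Real.log (1-T))*U ≤ (1.1241*T)*U :=
        mul_le_mul_of_nonneg_right hlogupT hU0.le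
      _ = 1.1241*T*U := by ring
  calc (-Real.log (1-T))/x + Real.exp (-x)
      ≤ 1.1241*T*U + 0.00134*U^2 := by linarith
    _ < E^2/2 + E^3/3 + E^4/4 + E^5/5 := hcore
    _ ≤ yo^2/2 + yo^3/3 + yo^4/4 + yo^5/5 := by linarith
    _ ≤ -Real.log (1-yo) - yo := by linarith
    _ ≤ -Real.log (1-y) - y := hmonof
end

section
/- Let x ≥ e be a real number. Then there exists a unique real number w ≥ 1 with w·log w = x, and this w satisfies: (a) w ≤ x/(log x − log log x); (b) log x − log log x ≤ log w ≤ log x − log log x − log(1 − (log log x)/(log x)). -/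
theorem omega_properties (x : ℝ) (hx : Real.exp 1 ≤ x) :
    (∃! w : ℝ, 1 ≤ w ∧ w * Real.log w = x) ∧
    ∀ w : ℝ, 1 ≤ w → w * Real.log w = x →
      w ≤ x / (Real.log x - Real.log (Real.log x)) ∧
      Real.log x - Real.log (Real.log x) ≤ Real.log w ∧
      Real.log w ≤ Real.log x - Real.log (Real.log x)
        - Real.log (1 - Real.log (Real.log x) / Real.log x) := by
  have he : (0:ℝ) < Real.exp 1 := Real.exp_pos 1
  have hx0 : 0 < x := lt_of_lt_of_le he hx
  have h1e : (1:ℝ) ≤ Real.exp 1 := Real.one_le_exp zero_le_one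
  have h1x : (1:ℝ) ≤ x := h1e.trans hx
  have hLx : 1 ≤ Real.log x := by
    rw [Real.le_log_iff_exp_le hx0]; simpa using hx
  have hmono : ∀ a b : ℝ, 1 ≤ a → a < b → a * Real.log a < b * Real.log b := by
    intro a b ha hab
    have hb1 : 1 < b := lt_of_le_of_lt ha hab
    have hlb : 0 < Real.log b := Real.log_pos hb1
    have hlab : Real.log a ≤ Real.log b := Real.log_le_log (by linarith) hab.le
    calc a * Real.log a ≤ a * Real.log b :=
          mul_le_mul_of_nonneg_left hlab (by linarith)
      _ < b * Real.log b := by nlinarith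
  have hcont : ContinuousOn (fun w => w * Real.log w) (Set.Icc 1 x) := by
    apply continuousOn_id.mul (Real.continuousOn_log.mono ?_)
    intro y hy
    simp only [Set.mem_Icc, Set.mem_compl_iff, Set.mem_singleton_iff] at hy ⊢
    intro h; rw [h] at hy; linarith [hy.1]
  have hmem : x ∈ Set.Icc ((fun w => w * Real.log w) 1) ((fun w => w * Real.log w) x) := by
    constructor
    · simp [Real.log_one]; linarith
    · simp only; nlinarith
  obtain ⟨w, hwmem, hfw0⟩ := intermediate_value_Icc h1x hcont hmem
  have hfw : w * Real.log w = x := hfw0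
  constructor
  · refine ⟨w, ⟨hwmem.1, hfw⟩, ?_⟩
    intro y ⟨hy1, hyx⟩
    rcases lt_trichotomy y w with h | h | h
    · have := hmono y w hy1 h; rw [hyx] at this; linarith [hfw]
    · exact h
    · have := hmono w y hwmem.1 h; rw [hyx] at this; linarith [hfw]
  · intro w hw1 hwx
    have hw0 : 0 < w := lt_of_lt_of_le zero_lt_one hw1
    have hwe : Real.exp 1 ≤ w := by
      by_contra h
      push_neg at h
      have hlw : Real.log w < 1 := by
        have := Real.log_lt_log hw0 h
        rwa [Real.log_exp] at this
      nlinarith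
    have hA1 : 1 ≤ Real.log w := by
      rw [Real.le_log_iff_exp_le hw0]; simpa using hwe
    have hA0 : 0 < Real.log w := lt_of_lt_of_le zero_lt_one hA1
    have hkey : Real.log x = Real.log w + Real.log (Real.log w) := by
      rw [← hwx, Real.log_mul (ne_of_gt hw0) (ne_of_gt hA0)]
    have hB0 : 0 ≤ Real.log (Real.log w) := Real.log_nonneg hA1
    have hAL : Real.log w ≤ Real.log x := by linarith
    have hBLL : Real.log (Real.log w) ≤ Real.log (Real.log x) :=
      Real.log_le_log hA0 hAL
    have hLLle : Real.log (Real.log x) ≤ Real.log x - 1 :=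
      Real.log_le_sub_one_of_pos (by linarith)
    have hpos : 0 < Real.log x - Real.log (Real.log x) := by linarith
    have hL0 : 0 < Real.log x := by linarith
    refine ⟨?_, by linarith, ?_⟩
    · rw [le_div_iff₀ hpos]
      have : w * (Real.log x - Real.log (Real.log x)) ≤ w * Real.log w :=
        mul_le_mul_of_nonneg_left (by linarith) hw0.le
      linarith [hwx]
    · have hfrac : 1 - Real.log (Real.log x) / Real.log x
          = (Real.log x - Real.log (Real.log x)) / Real.log x := by
        field_simp
      have hsplit : Real.log (Real.log x - Real.log (Real.log x))
          = Real.log (Real.log x) + Real.log (1 - Real.log (Real.log x) / Real.log x) := by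
        rw [hfrac, Real.log_div (ne_of_gt hpos) (ne_of_gt hL0)]
        ring
      have hlogle : Real.log (Real.log x - Real.log (Real.log x)) ≤ Real.log (Real.log w) :=
        Real.log_le_log hpos (by linarith)
      linarith
end
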